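/- arXiv:1212.3125 — 2 statements merged into one kernel-verified Lean document; each statement's English description precedes it below -/
import Mathlib

section
/- For $n \ge 2$, the center of the Baumslag–Solitar group $BS(n,n) = \langle a, t \mid t a^n t^{-1} = a^n \rangle$ is exactly the cyclic subgroup generated by $a^n$. -/
/-- The relator set for `BS(n,n) = ⟨a, t ∣ t aⁿ t⁻¹ = aⁿ⟩`, with `a` indexed by `0`
and `t` indexed by `1`. -/
def bsRel (n : ℕ) : Set (FreeGroup (Fin 2)) :=
  {FreeGroup.of 1 * FreeGroup.of 0 ^ n * (FreeGroup.of 1)⁻¹ * (FreeGroup.of 0 ^ n)⁻¹}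

open Monoid.CoprodI in
/-- Products of reduced words are injective. -/
theorem coprodI_prod_inj {ι : Type*} {G : ι → Type*} [∀ i, Group (G i)] [DecidableEq ι]
    [∀ i, DecidableEq (G i)] :
    Function.Injective (Word.prod : Word G → Monoid.CoprodI G) := by
  intro u v h
  exact Word.equiv.symm.injective (show Word.equiv.symm u = Word.equiv.symm v from h)

open Monoid.CoprodI in
/-- The center of a free product of nontrivial groups (over a nontrivial index type)
is trivial. -/
theorem coprodI_center_triv {ι : Type*} [Nontrivial ι] {G : ι → Type*} [∀ i, Group (G i)]
    [∀ i, Nontrivial (G i)] {x : Monoid.CoprodI G} (hx : ∀ y, y * x = x * y) : x = 1 := by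
  classical
  by_contra hx1
  set w : Word G := Word.equiv x with hwdef
  have hw : w.prod = x := Word.equiv.left_inv x
  have hl : w.toList ≠ [] := by
    intro h
    apply hx1
    rw [← hw, Word.prod, h]
    simp
  obtain ⟨⟨i, m₁⟩, l₁, hcons⟩ := List.exists_cons_of_ne_nil hl
  obtain ⟨j₀, hj₀⟩ := exists_ne i
  obtain ⟨g, hg⟩ := exists_ne (1 : G j₀)
  -- the word for `of g * x`
  have hvchain : (⟨j₀, g⟩ :: w.toList).Chain' (fun a b : (Σ i, G i) => a.1 ≠ b.1) := by
    rw [hcons]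
    exact List.IsChain.cons_cons (by exact hj₀) (hcons ▸ w.chain_ne)
  set v : Word G := ⟨⟨j₀, g⟩ :: w.toList, by
      intro l hl'
      rcases List.mem_cons.1 hl' with h | h
      · rw [h]; exact hg
      · exact w.ne_one l h, hvchain⟩ with hvdef
  have hv : v.prod = of g * x := by
    rw [← hw]
    simp [Word.prod, v]
  -- decompose w from the right
  rcases List.eq_nil_or_concat w.toList with h | ⟨l₂, ⟨j, m₂⟩, hconc⟩
  · exact hl h
  rw [List.concat_eq_append] at hconc
  have hx2 : x = (l₂.map fun p : (Σ i, G i) => of p.2).prod * of m₂ := by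
    rw [← hw, Word.prod, hconc]
    simp
  have hchain₂ : l₂.Chain' (fun a b : (Σ i, G i) => a.1 ≠ b.1) :=
    (List.isChain_append.1 (hconc ▸ w.chain_ne)).1
  have hne₂ : ∀ l ∈ l₂, Sigma.snd l ≠ 1 := fun l h => w.ne_one l (hconc ▸ List.mem_append_left _ h)
  have hlen : w.toList.length = l₂.length + 1 := by rw [hconc]; simp
  have hvu : ∀ u : Word G, u.prod = x * of g → u = v := by
    intro u hu
    apply coprodI_prod_inj
    rw [hu, hv, hx (of g)]
  by_cases hj : j = j₀
  · subst hj
    by_cases hm : m₂ * g = 1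
    · -- u := l₂
      set u : Word G := ⟨l₂, hne₂, hchain₂⟩ with hudef
      have hu : u.prod = x * of g := by
        rw [hx2, mul_assoc, ← MonoidHom.map_mul, hm, MonoidHom.map_one, mul_one]
        rfl
      have := congrArg (fun z : Word G => z.toList.length) (hvu u hu)
      simp [u, v, hlen] at this
      omega
    · -- u := l₂ ++ [⟨j₀, m₂ * g⟩]
      have hchain : (l₂ ++ [⟨j, m₂ * g⟩] : List (Σ i, G i)).IsChain (fun a b => a.1 ≠ b.1) := by
        rw [List.isChain_append]
        refine ⟨hchain₂, List.isChain_singleton _, ?_⟩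
        have := (List.isChain_append.1 (hconc ▸ w.chain_ne)).2.2
        simpa using this
      set u : Word G := ⟨l₂ ++ [⟨j, m₂ * g⟩], by
          intro l hl'
          rcases List.mem_append.1 hl' with h | h
          · exact hne₂ l h
          · rw [List.mem_singleton.1 h]; exact hm, hchain⟩ with hudef
      have hu : u.prod = x * of g := by
        rw [hx2, mul_assoc, ← MonoidHom.map_mul]
        simp [Word.prod, u]
      have := congrArg (fun z : Word G => z.toList.length) (hvu u hu)
      simp [u, v, hlen] at this
  · -- u := w.toList ++ [⟨j₀, g⟩]
    have hchain : (w.toList ++ [⟨j₀, g⟩] : List (Σ i, G i)).IsChain (fun a b => a.1 ≠ b.1) := by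
      rw [List.isChain_append]
      refine ⟨w.chain_ne, List.isChain_singleton _, ?_⟩
      intro a ha b hb
      rw [hconc] at ha
      simp at ha hb
      rw [← ha, ← hb]
      exact hj
    set u : Word G := ⟨w.toList ++ [⟨j₀, g⟩], by
        intro l hl'
        rcases List.mem_append.1 hl' with h | h
        · exact w.ne_one l h
        · rw [List.mem_singleton.1 h]; exact hg, hchain⟩ with hudef
    have hu : u.prod = x * of g := by
      rw [← hw]
      simp [Word.prod, u]
    have := congrArg (fun z : Word G => z.toList) (hvu u hu)
    simp only [u, v] at this
    rw [hcons] at this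
    simp at this
    exact hj₀ this.1.1.symm

/-! ### The free product `C_n * ℤ` -/

/-- The two factors of `C_n * ℤ`. -/
def bsFactor (n : ℕ) : Bool → Type
  | false => Multiplicative (ZMod n)
  | true => Multiplicative ℤ

instance (n : ℕ) (b : Bool) : Group (bsFactor n b) := by
  cases b
  · exact inferInstanceAs (Group (Multiplicative (ZMod n)))
  · exact inferInstanceAs (Group (Multiplicative ℤ))

/-- generator of the `C_n` factor. -/
def bsA (n : ℕ) : bsFactor n false := show Multiplicative (ZMod n) from Multiplicative.ofAdd 1

/-- generator of the `ℤ` factor. -/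
def bsT (n : ℕ) : bsFactor n true := show Multiplicative ℤ from Multiplicative.ofAdd 1

/-- images of the generators of `BS(n,n)` in `C_n * ℤ`. -/
def bsGen (n : ℕ) : Fin 2 → Monoid.CoprodI (bsFactor n) :=
  ![Monoid.CoprodI.of (bsA n), Monoid.CoprodI.of (bsT n)]

theorem bsA_pow (n : ℕ) : bsA n ^ n = 1 := by
  show (Multiplicative.ofAdd (1 : ZMod n)) ^ n = 1
  rw [← ofAdd_nsmul]
  simp [nsmul_eq_mul]

theorem bsGen_zero_pow (n : ℕ) : bsGen n 0 ^ n = 1 := by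
  have h2 : bsGen n 0 = Monoid.CoprodI.of (bsA n) := rfl
  rw [h2, ← map_pow, bsA_pow, map_one]

theorem bs_lift_rel (n : ℕ) : ∀ r ∈ bsRel n, FreeGroup.lift (bsGen n) r = 1 := by
  intro r hr
  rw [bsRel, Set.mem_singleton_iff] at hr
  subst hr
  simp only [map_mul, map_inv, map_pow, FreeGroup.lift_apply_of, bsGen_zero_pow]
  simp

theorem bsA_gen (n : ℕ) [NeZero n] (m : bsFactor n false) : ∃ k : ℕ, bsA n ^ k = m := by
  refine ⟨(Multiplicative.toAdd (show Multiplicative (ZMod n) from m)).val, ?_⟩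
  show (Multiplicative.ofAdd (1 : ZMod n)) ^ _ = _
  erw [← ofAdd_nsmul]
  simp [nsmul_eq_mul, ZMod.natCast_val]
  rfl

theorem bsT_gen (n : ℕ) (m : bsFactor n true) : ∃ k : ℤ, bsT n ^ k = m := by
  refine ⟨Multiplicative.toAdd (show Multiplicative ℤ from m), ?_⟩
  show (Multiplicative.ofAdd (1 : ℤ)) ^ _ = _
  erw [← ofAdd_zsmul]
  simp
  rfl

theorem bsFactor_nontrivial (n : ℕ) (hn : 2 ≤ n) (b : Bool) : Nontrivial (bsFactor n b) := by
  haveI : Fact (1 < n) := ⟨hn⟩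
  cases b
  · exact inferInstanceAs (Nontrivial (Multiplicative (ZMod n)))
  · exact inferInstanceAs (Nontrivial (Multiplicative ℤ))

/-! ### The relation in `BS(n,n)` and centrality of `aⁿ` -/

theorem bs_rel_holds (n : ℕ) :
    (PresentedGroup.of 1 : PresentedGroup (bsRel n)) * (PresentedGroup.of 0) ^ n *
      (PresentedGroup.of 1)⁻¹ * ((PresentedGroup.of 0) ^ n)⁻¹ = 1 := by
  have hmem : (FreeGroup.of 1 * FreeGroup.of 0 ^ n * (FreeGroup.of 1)⁻¹ *
      (FreeGroup.of 0 ^ n)⁻¹ : FreeGroup (Fin 2)) ∈ Subgroup.normalClosure (bsRel n) :=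
    Subgroup.subset_normalClosure rfl
  have h : PresentedGroup.mk (bsRel n) (FreeGroup.of 1 * FreeGroup.of 0 ^ n *
      (FreeGroup.of 1)⁻¹ * (FreeGroup.of 0 ^ n)⁻¹) = 1 := (QuotientGroup.eq_one_iff _).2 hmem
  exact h

theorem bs_t_comm (n : ℕ) :
    (PresentedGroup.of 1 : PresentedGroup (bsRel n)) * (PresentedGroup.of 0) ^ n =
      (PresentedGroup.of 0) ^ n * PresentedGroup.of 1 := by
  have h := bs_rel_holds n
  rw [mul_inv_eq_one] at h
  have h2 : PresentedGroup.of 1 * PresentedGroup.of 0 ^ n * (PresentedGroup.of 1)⁻¹ *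
      PresentedGroup.of 1 = (PresentedGroup.of 0 : PresentedGroup (bsRel n)) ^ n *
      PresentedGroup.of 1 := by rw [h]
  rwa [inv_mul_cancel_right] at h2

theorem bs_an_mem_center (n : ℕ) :
    ((PresentedGroup.of 0 : PresentedGroup (bsRel n)) ^ n) ∈ Subgroup.center _ := by
  rw [Subgroup.mem_center_iff]
  intro g
  have hg : g ∈ Subgroup.centralizer
      {((PresentedGroup.of 0 : PresentedGroup (bsRel n)) ^ n)} := by
    refine PresentedGroup.generated_by (bsRel n) _ (fun j => ?_) g
    rw [Subgroup.mem_centralizer_iff]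
    intro h hh
    rw [Set.mem_singleton_iff] at hh
    subst hh
    fin_cases j
    · exact ((Commute.refl (PresentedGroup.of 0)).pow_left n).eq
    · exact (bs_t_comm n).symm
  exact (Subgroup.mem_centralizer_iff.1 hg _ (Set.mem_singleton _)).symm

instance bsK_normal (n : ℕ) :
    (Subgroup.zpowers ((PresentedGroup.of 0 : PresentedGroup (bsRel n)) ^ n)).Normal := by
  constructor
  intro x hx g
  obtain ⟨k, hk⟩ := Subgroup.mem_zpowers_iff.1 hx
  have hc : x ∈ Subgroup.center (PresentedGroup (bsRel n)) := by
    rw [← hk]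
    exact Subgroup.zpow_mem _ (bs_an_mem_center n) k
  have : g * x * g⁻¹ = x := by
    rw [Subgroup.mem_center_iff.1 hc g, mul_inv_cancel_right]
  rwa [this]

/-! ### The projection `BS(n,n) → C_n * ℤ` -/

/-- The projection `BS(n,n) → C_n * ℤ` killing `aⁿ`. -/
def bsPsi (n : ℕ) : PresentedGroup (bsRel n) →* Monoid.CoprodI (bsFactor n) :=
  PresentedGroup.toGroup (bs_lift_rel n)

theorem bsPsi_of0 (n : ℕ) : bsPsi n (PresentedGroup.of 0) = Monoid.CoprodI.of (bsA n) :=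
  PresentedGroup.toGroup.of _

theorem bsPsi_of1 (n : ℕ) : bsPsi n (PresentedGroup.of 1) = Monoid.CoprodI.of (bsT n) :=
  PresentedGroup.toGroup.of _

theorem bsPsi_eq_one (n : ℕ) (hn : 2 ≤ n) {g : PresentedGroup (bsRel n)}
    (hg : g ∈ Subgroup.center (PresentedGroup (bsRel n))) : bsPsi n g = 1 := by
  haveI : NeZero n := ⟨by omega⟩
  haveI : ∀ b, Nontrivial (bsFactor n b) := bsFactor_nontrivial n hn
  apply coprodI_center_triv
  intro y
  induction y using Monoid.CoprodI.induction_on with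
  | one => rw [one_mul, mul_one]
  | of i m =>
    obtain ⟨z, hz⟩ : ∃ z, bsPsi n z = Monoid.CoprodI.of m := by
      cases i
      · obtain ⟨k, hk⟩ := bsA_gen n m
        exact ⟨PresentedGroup.of 0 ^ k, by rw [map_pow, bsPsi_of0, ← map_pow, hk]⟩
      · obtain ⟨k, hk⟩ := bsT_gen n m
        exact ⟨PresentedGroup.of 1 ^ k, by rw [map_zpow, bsPsi_of1, ← map_zpow, hk]⟩
    rw [← hz, ← map_mul, ← map_mul, Subgroup.mem_center_iff.1 hg z]
  | mul a b ha hb => rw [mul_assoc, hb, ← mul_assoc, ha, mul_assoc]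

/-! ### The map back from `C_n * ℤ` to `BS(n,n)/⟨aⁿ⟩` -/

/-- The quotient `BS(n,n)/⟨aⁿ⟩`. -/
def bsQ (n : ℕ) : Type :=
  PresentedGroup (bsRel n) ⧸ Subgroup.zpowers ((PresentedGroup.of 0 :
    PresentedGroup (bsRel n)) ^ n)

instance (n : ℕ) : Group (bsQ n) :=
  inferInstanceAs (Group (PresentedGroup (bsRel n) ⧸ Subgroup.zpowers ((PresentedGroup.of 0 :
    PresentedGroup (bsRel n)) ^ n)))

/-- The quotient map. -/
def bsPi (n : ℕ) : PresentedGroup (bsRel n) →* bsQ n :=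
  QuotientGroup.mk' _

theorem bsPi_pow (n : ℕ) : (bsPi n (PresentedGroup.of 0)) ^ n = 1 := by
  rw [← map_pow]
  exact (QuotientGroup.eq_one_iff _).2 (Subgroup.mem_zpowers _)

/-- The map `C_n → BS(n,n)/⟨aⁿ⟩`. -/
def bsFFalse (n : ℕ) [NeZero n] : bsFactor n false →* bsQ n where
  toFun m := (bsPi n (PresentedGroup.of 0)) ^
    (Multiplicative.toAdd (show Multiplicative (ZMod n) from m)).val
  map_one' := by
    show (bsPi n (PresentedGroup.of 0)) ^ (0 : ZMod n).val = 1
    rw [ZMod.val_zero, pow_zero]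
  map_mul' := by
    intro m₁ m₂
    show (bsPi n (PresentedGroup.of 0)) ^
      (Multiplicative.toAdd (show Multiplicative (ZMod n) from m₁) +
       Multiplicative.toAdd (show Multiplicative (ZMod n) from m₂)).val = _
    rw [ZMod.val_add, ← pow_eq_pow_mod _ (bsPi_pow n), pow_add]

/-- The family of maps out of the factors of `C_n * ℤ`. -/
def bsFi (n : ℕ) [NeZero n] : ∀ b, bsFactor n b →* bsQ n
  | false => bsFFalse n
  | true => zpowersHom (bsQ n) (bsPi n (PresentedGroup.of 1))

/-- The map `C_n * ℤ → BS(n,n)/⟨aⁿ⟩`. -/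
def bsPhi (n : ℕ) [NeZero n] : Monoid.CoprodI (bsFactor n) →* bsQ n :=
  Monoid.CoprodI.lift (bsFi n)

theorem bsPhi_comp (n : ℕ) (hn : 2 ≤ n) [NeZero n] :
    (bsPhi n).comp (bsPsi n) = bsPi n := by
  haveI : Fact (1 < n) := ⟨hn⟩
  apply PresentedGroup.ext
  intro j
  fin_cases j
  · show bsPhi n (bsPsi n (PresentedGroup.of 0)) = bsPi n (PresentedGroup.of 0)
    rw [bsPsi_of0, bsPhi, Monoid.CoprodI.lift_of]
    show (bsPi n (PresentedGroup.of 0)) ^ (1 : ZMod n).val = _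
    rw [ZMod.val_one, pow_one]
  · show bsPhi n (bsPsi n (PresentedGroup.of 1)) = bsPi n (PresentedGroup.of 1)
    rw [bsPsi_of1, bsPhi, Monoid.CoprodI.lift_of]
    show (bsPi n (PresentedGroup.of 1)) ^ (1 : ℤ) = _
    rw [zpow_one]

/-! ### The main theorem -/

/-- For `n ≥ 2`, the center of `BS(n,n)` is the cyclic subgroup generated by `aⁿ`. -/
theorem bs_center_eq_zpowers (n : ℕ) (hn : 2 ≤ n) :
    Subgroup.center (PresentedGroup (bsRel n)) =
      Subgroup.zpowers ((PresentedGroup.of 0 : PresentedGroup (bsRel n)) ^ n) := by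
  haveI : NeZero n := ⟨by omega⟩
  apply le_antisymm
  · intro g hg
    have h1 : bsPsi n g = 1 := bsPsi_eq_one n hn hg
    have h2 : bsPi n g = 1 := by
      have h3 := DFunLike.congr_fun (bsPhi_comp n hn) g
      rw [MonoidHom.comp_apply, h1, map_one] at h3
      exact h3.symm
    exact (QuotientGroup.eq_one_iff g).1 h2
  · intro x hx
    obtain ⟨k, hk⟩ := Subgroup.mem_zpowers_iff.1 hx
    rw [← hk]
    exact Subgroup.zpow_mem _ (bs_an_mem_center n) k
end

section
/- The presented group $\langle a, t, b \mid t a t^{-1} = a^6,\ b^2 = a^5 \rangle$ is isomorphic to the presented group $\langle a, t, b \mid t a t^{-1} = a^6,\ b^2 = a^{10} \rangle$. -/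
/-- Relators for `⟨a, t, b ∣ t a t⁻¹ = a⁶, b² = a⁵⟩`, with `a, t, b` indexed by `0, 1, 2`. -/
def inducRel₁ : Set (FreeGroup (Fin 3)) :=
  {FreeGroup.of 1 * FreeGroup.of 0 * (FreeGroup.of 1)⁻¹ * (FreeGroup.of 0 ^ 6)⁻¹,
   FreeGroup.of 2 ^ 2 * (FreeGroup.of 0 ^ 5)⁻¹}

/-- Relators for `⟨a, t, b ∣ t a t⁻¹ = a⁶, b² = a¹⁰⟩`, with `a, t, b` indexed by `0, 1, 2`. -/
def inducRel₂ : Set (FreeGroup (Fin 3)) :=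
  {FreeGroup.of 1 * FreeGroup.of 0 * (FreeGroup.of 1)⁻¹ * (FreeGroup.of 0 ^ 6)⁻¹,
   FreeGroup.of 2 ^ 2 * (FreeGroup.of 0 ^ 10)⁻¹}

namespace InducIso

open PresentedGroup

lemma rel_one {α : Type*} {rels : Set (FreeGroup α)} {r : FreeGroup α} (h : r ∈ rels) :
    PresentedGroup.mk rels r = 1 :=
  (QuotientGroup.eq_one_iff r).2 (Subgroup.subset_normalClosure h)

lemma relA₂ : (of 1 : PresentedGroup inducRel₂) * of 0 * (of 1)⁻¹ = of 0 ^ 6 := by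
  have h := rel_one (rels := inducRel₂) (Or.inl rfl)
  simp [mul_inv_eq_one, map_mul, map_inv, map_pow] at h; exact h

lemma relB₂ : (of 2 : PresentedGroup inducRel₂) ^ 2 = of 0 ^ 10 := by
  have h := rel_one (rels := inducRel₂) (Or.inr rfl)
  simp [mul_inv_eq_one, map_mul, map_inv, map_pow] at h; exact h

lemma relA₁ : (of 1 : PresentedGroup inducRel₁) * of 0 * (of 1)⁻¹ = of 0 ^ 6 := by
  have h := rel_one (rels := inducRel₁) (Or.inl rfl)
  simp [mul_inv_eq_one, map_mul, map_inv, map_pow] at h; exact h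

lemma relB₁ : (of 2 : PresentedGroup inducRel₁) ^ 2 = of 0 ^ 5 := by
  have h := rel_one (rels := inducRel₁) (Or.inr rfl)
  simp [mul_inv_eq_one, map_mul, map_inv, map_pow] at h; exact h

lemma conjA₂ (n : ℕ) :
    (of 1 : PresentedGroup inducRel₂) * of 0 ^ n * (of 1)⁻¹ = of 0 ^ (6 * n) := by
  rw [← conj_pow, relA₂, ← pow_mul]

lemma conjA₁ (n : ℕ) :
    (of 1 : PresentedGroup inducRel₁) * of 0 ^ n * (of 1)⁻¹ = of 0 ^ (6 * n) := by
  rw [← conj_pow, relA₁, ← pow_mul]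

lemma key (n : ℕ) : ((of 1)⁻¹ * of 0 ^ 3 * of 1 : PresentedGroup inducRel₁) ^ n
    = (of 1)⁻¹ * of 0 ^ (3 * n) * of 1 := by
  have := conj_pow (i := n) (a := ((of 1 : PresentedGroup inducRel₁))⁻¹) (b := of 0 ^ 3)
  simp only [inv_inv] at this
  rw [this, ← pow_mul, Nat.mul_comm]

/-- `a ↦ a², t ↦ t, b ↦ b`. -/
def f₁ : Fin 3 → PresentedGroup inducRel₂ := ![of 0 ^ 2, of 1, of 2]

/-- `a ↦ t⁻¹ a³ t, t ↦ t, b ↦ b`. -/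
def f₂ : Fin 3 → PresentedGroup inducRel₁ := ![(of 1)⁻¹ * of 0 ^ 3 * of 1, of 1, of 2]

lemma h₁ : ∀ r ∈ inducRel₁, FreeGroup.lift f₁ r = 1 := by
  rintro r (rfl | rfl)
  · simp only [map_mul, map_inv, map_pow, FreeGroup.lift_apply_of, mul_inv_eq_one]
    show (of 1 : PresentedGroup inducRel₂) * of 0 ^ 2 * (of 1)⁻¹ = (of 0 ^ 2) ^ 6
    rw [conjA₂ 2, ← pow_mul]
  · simp only [map_mul, map_inv, map_pow, FreeGroup.lift_apply_of, mul_inv_eq_one]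
    show (of 2 : PresentedGroup inducRel₂) ^ 2 = (of 0 ^ 2) ^ 5
    rw [relB₂, ← pow_mul]

lemma h₂ : ∀ r ∈ inducRel₂, FreeGroup.lift f₂ r = 1 := by
  rintro r (rfl | rfl)
  · simp only [map_mul, map_inv, map_pow, FreeGroup.lift_apply_of, mul_inv_eq_one]
    show (of 1 : PresentedGroup inducRel₁) * ((of 1)⁻¹ * of 0 ^ 3 * of 1) * (of 1)⁻¹
        = ((of 1)⁻¹ * of 0 ^ 3 * of 1) ^ 6
    rw [key 6]
    have h3 := conjA₁ 3
    norm_num at h3 ⊢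
    rw [← h3]; group
  · simp only [map_mul, map_inv, map_pow, FreeGroup.lift_apply_of, mul_inv_eq_one]
    show (of 2 : PresentedGroup inducRel₁) ^ 2 = ((of 1)⁻¹ * of 0 ^ 3 * of 1) ^ 10
    rw [key 10, relB₁]
    have h5 := conjA₁ 5
    norm_num at h5 ⊢
    rw [← h5]; group

lemma c21_0 : toGroup h₂ (toGroup h₁ (of (0 : Fin 3))) = of (0 : Fin 3) := by
  rw [toGroup.of]
  show toGroup h₂ (of 0 ^ 2) = of 0
  rw [map_pow, toGroup.of]
  show ((of 1)⁻¹ * of 0 ^ 3 * of 1 : PresentedGroup inducRel₁) ^ 2 = of 0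
  rw [key 2]
  have h := conjA₁ 1
  norm_num at h ⊢
  rw [← h]; group

lemma c21_1 : toGroup h₂ (toGroup h₁ (of (1 : Fin 3))) = of (1 : Fin 3) := by
  rw [toGroup.of]
  show toGroup h₂ (of 1) = of 1
  rw [toGroup.of]; rfl

lemma c21_2 : toGroup h₂ (toGroup h₁ (of (2 : Fin 3))) = of (2 : Fin 3) := by
  rw [toGroup.of]
  show toGroup h₂ (of 2) = of 2
  rw [toGroup.of]; rfl

lemma c12_0 : toGroup h₁ (toGroup h₂ (of (0 : Fin 3))) = of (0 : Fin 3) := by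
  rw [toGroup.of]
  show toGroup h₁ ((of 1)⁻¹ * of 0 ^ 3 * of 1) = of 0
  rw [map_mul, map_mul, map_inv, map_pow, toGroup.of, toGroup.of]
  show ((of 1 : PresentedGroup inducRel₂))⁻¹ * (of 0 ^ 2) ^ 3 * of 1 = of 0
  have h := conjA₂ 1
  norm_num at h
  rw [← pow_mul]
  norm_num
  rw [← h]; group

lemma c12_1 : toGroup h₁ (toGroup h₂ (of (1 : Fin 3))) = of (1 : Fin 3) := by
  rw [toGroup.of]
  show toGroup h₁ (of 1) = of 1
  rw [toGroup.of]; rfl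

lemma c12_2 : toGroup h₁ (toGroup h₂ (of (2 : Fin 3))) = of (2 : Fin 3) := by
  rw [toGroup.of]
  show toGroup h₁ (of 2) = of 2
  rw [toGroup.of]; rfl

/-- The isomorphism. -/
noncomputable def iso : PresentedGroup inducRel₁ ≃* PresentedGroup inducRel₂ := by
  refine MonoidHom.toMulEquiv (toGroup h₁) (toGroup h₂)
    (PresentedGroup.ext fun x => ?_) (PresentedGroup.ext fun x => ?_) <;> fin_cases x
  · exact c21_0
  · exact c21_1
  · exact c21_2
  · exact c12_0
  · exact c12_1
  · exact c12_2

end InducIso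

/-- `⟨a, t, b ∣ t a t⁻¹ = a⁶, b² = a⁵⟩` is isomorphic to `⟨a, t, b ∣ t a t⁻¹ = a⁶, b² = a¹⁰⟩`. -/
theorem induction_iso :
    Nonempty (PresentedGroup inducRel₁ ≃* PresentedGroup inducRel₂) := by
  exact ⟨InducIso.iso⟩
end
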